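/- With the WSABI-L setup, let π(x) = N(x; μ_π, Σ_π) be a Gaussian prior density with μ_π ∈ ℝ^d and Σ_π ∈ ℝ^{d×d} symmetric positive definite. Then for every α ∈ ℝ, ∫ (α + ½ m̃(x)²) π(x) dx = α + Σ_{i,j=1}^n w^m_{ij} N( (X_i + X_j)/2 ; μ_π, W/2 + Σ_π ), where w^m_{ij} := ½ v² ω_i ω_j N(X_i; X_j, 2W). -/

import Mathlib

open MeasureTheory Matrix

/-- The multivariate Gaussian density
`N(x; m, Σ) = det(2πΣ)^{-1/2} exp(-½ (x-m)ᵀ Σ⁻¹ (x-m))` on `ℝ^d`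
(for a symmetric positive definite covariance matrix `Σ`). -/
noncomputable def gaussDensity {d : ℕ} (m : Fin d → ℝ) (S : Matrix (Fin d) (Fin d) ℝ)
    (x : Fin d → ℝ) : ℝ :=
  (Real.sqrt ((2 * Real.pi) ^ d * S.det))⁻¹ *
    Real.exp (-(1 / 2) * ((x - m) ⬝ᵥ (S⁻¹ *ᵥ (x - m))))

/-- WSABI-L setup: the Gram matrix `K_XX` with entries
`(K_XX)_{ij} = v N(X_i; X_j, W)` of the squared-exponential kernel
`K(x, x') = v N(x; x', W)` at the points `X_1, …, X_n`. -/
noncomputable def gramKxx {d n : ℕ} (v : ℝ) (W : Matrix (Fin d) (Fin d) ℝ)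
    (X : Fin n → (Fin d → ℝ)) : Matrix (Fin n) (Fin n) ℝ :=
  Matrix.of fun i j => v * gaussDensity (X j) W (X i)

/-- WSABI-L setup: the Woodbury vector `ω := K_XX⁻¹ y`. -/
noncomputable def woodbury {d n : ℕ} (v : ℝ) (W : Matrix (Fin d) (Fin d) ℝ)
    (X : Fin n → (Fin d → ℝ)) (y : Fin n → ℝ) : Fin n → ℝ :=
  (gramKxx v W X)⁻¹ *ᵥ y

/-- WSABI-L setup: the Gaussian-process posterior mean
`m̃(x) := v Σ_i ω_i N(x; X_i, W)`. -/
noncomputable def gpMean {d n : ℕ} (v : ℝ) (W : Matrix (Fin d) (Fin d) ℝ)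
    (X : Fin n → (Fin d → ℝ)) (y : Fin n → ℝ) (x : Fin d → ℝ) : ℝ :=
  v * ∑ i, woodbury v W X y i * gaussDensity (X i) W x

/-- WSABI-L setup: the Gaussian-process posterior variance
`C̃(x) := v N(x; x, W) − v² Σ_{k,l} Ω_{kl} N(x; X_k, W) N(x; X_l, W)`,
where `Ω := K_XX⁻¹`. -/
noncomputable def gpVar {d n : ℕ} (v : ℝ) (W : Matrix (Fin d) (Fin d) ℝ)
    (X : Fin n → (Fin d → ℝ)) (x : Fin d → ℝ) : ℝ :=
  v * gaussDensity x W x -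
    v ^ 2 * ∑ k, ∑ l, (gramKxx v W X)⁻¹ k l *
      gaussDensity (X k) W x * gaussDensity (X l) W x

open Real

/-!
Completing the square shows that the product of the Gaussian densities `N(x; a, A)` and
`N(x; b, B)` is the constant `N(a; b, A + B)` times a Gaussian density in `x`. Applied to
`N(x; X_i, W) N(x; X_j, W)` this writes `m̃²` as a combination of Gaussians of covariance `W / 2`
centred at `(X_i + X_j) / 2`; applied once more against the prior, each term integrates to its
constant because Gaussian densities have mass one.
-/

section ChangeOfVariables

variable {d : ℕ} {M : Matrix (Fin d) (Fin d) ℝ}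

lemma measurableEmbedding_mulVec (hM : M.det ≠ 0) : MeasurableEmbedding (M *ᵥ ·) :=
  (M.toLinearEquiv' (M.invertibleOfIsUnitDet hM.isUnit)).toContinuousLinearEquiv.toHomeomorph
    |>.measurableEmbedding

lemma map_mulVec_volume (hM : M.det ≠ 0) :
    Measure.map (M *ᵥ ·) volume = ENNReal.ofReal |M.det|⁻¹ • volume := by
  have h := Real.map_linearMap_volume_pi_eq_smul_volume_pi (f := Matrix.toLin' M)
    (by rwa [LinearMap.det_toLin'])
  rwa [LinearMap.det_toLin', abs_inv] at h

lemma integral_comp_mulVec (hM : M.det ≠ 0) (g : (Fin d → ℝ) → ℝ) :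
    ∫ x, g (M *ᵥ x) = |M.det|⁻¹ * ∫ x, g x := by
  rw [← (measurableEmbedding_mulVec hM).integral_map, map_mulVec_volume hM,
    integral_smul_measure, ENNReal.toReal_ofReal (by positivity), smul_eq_mul]

lemma MeasureTheory.Integrable.comp_mulVec (hM : M.det ≠ 0) {g : (Fin d → ℝ) → ℝ}
    (hg : Integrable g) : Integrable (fun x ↦ g (M *ᵥ x)) := by
  have hg' : Integrable g (Measure.map (M *ᵥ ·) volume) := by
    rw [map_mulVec_volume hM]
    exact hg.smul_measure ENNReal.ofReal_ne_top
  exact (measurableEmbedding_mulVec hM).integrable_map_iff.mp hg'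

end ChangeOfVariables

section GaussianIntegral

variable {d : ℕ}

lemma exp_neg_half_dotProduct_self (x : Fin d → ℝ) :
    exp (-(1 / 2) * (x ⬝ᵥ x)) = ∏ i, exp (-(1 / 2) * x i ^ 2) := by
  simp only [← exp_sum, dotProduct, Finset.mul_sum, sq]

lemma integrable_exp_neg_half_dotProduct_self :
    Integrable (fun x : Fin d → ℝ ↦ exp (-(1 / 2) * (x ⬝ᵥ x))) := by
  simp_rw [exp_neg_half_dotProduct_self]
  refine Integrable.fintype_prod (f := fun _ t ↦ exp (-(1 / 2) * t ^ 2)) fun _ ↦ ?_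
  simpa only [neg_mul] using integrable_exp_neg_mul_sq (by norm_num : (0 : ℝ) < 1 / 2)

lemma integral_exp_neg_half_dotProduct_self :
    ∫ x : Fin d → ℝ, exp (-(1 / 2) * (x ⬝ᵥ x)) = √(2 * π) ^ d := by
  simp_rw [exp_neg_half_dotProduct_self]
  rw [volume_pi, integral_fintype_prod_eq_pow (fun t ↦ exp (-(1 / 2) * t ^ 2)), Fintype.card_fin]
  congr 1
  simpa only [neg_mul, div_div_eq_mul_div, div_one, mul_comm π] using integral_gaussian (1 / 2)

open scoped MatrixOrder in
lemma Matrix.PosSemidef.exists_det_sq_eq_and_dotProduct_mulVec_eq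
    {B : Matrix (Fin d) (Fin d) ℝ} (hB : B.PosSemidef) :
    ∃ L : Matrix (Fin d) (Fin d) ℝ,
      L.det ^ 2 = B.det ∧ ∀ x, x ⬝ᵥ (B *ᵥ x) = (L *ᵥ x) ⬝ᵥ (L *ᵥ x) := by
  have hLL : CFC.sqrt B * CFC.sqrt B = B := CFC.sqrt_mul_sqrt_self B hB.nonneg
  have hLt : (CFC.sqrt B)ᵀ = CFC.sqrt B := (CFC.sqrt_nonneg B).posSemidef.isHermitian
  refine ⟨CFC.sqrt B, by rw [sq, ← det_mul, hLL], fun x ↦ ?_⟩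
  conv_lhs => rw [← hLL, ← mulVec_mulVec]
  rw [dotProduct_mulVec, ← mulVec_transpose, hLt]

variable {B : Matrix (Fin d) (Fin d) ℝ}

lemma integrable_exp_neg_half_dotProduct_mulVec (hB : B.PosDef) :
    Integrable (fun x : Fin d → ℝ ↦ exp (-(1 / 2) * (x ⬝ᵥ (B *ᵥ x)))) := by
  obtain ⟨L, hLdet, hL⟩ := hB.posSemidef.exists_det_sq_eq_and_dotProduct_mulVec_eq
  have hL0 : L.det ≠ 0 := (pow_ne_zero_iff two_ne_zero).mp (hLdet ▸ hB.det_pos.ne')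
  simp_rw [hL]
  exact integrable_exp_neg_half_dotProduct_self.comp_mulVec hL0

lemma integral_exp_neg_half_dotProduct_mulVec (hB : B.PosDef) :
    ∫ x : Fin d → ℝ, exp (-(1 / 2) * (x ⬝ᵥ (B *ᵥ x))) = √((2 * π) ^ d / B.det) := by
  obtain ⟨L, hLdet, hL⟩ := hB.posSemidef.exists_det_sq_eq_and_dotProduct_mulVec_eq
  have hL0 : L.det ≠ 0 := (pow_ne_zero_iff two_ne_zero).mp (hLdet ▸ hB.det_pos.ne')
  have hpow : √(2 * π) ^ d = √((2 * π) ^ d) := by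
    rw [← sqrt_sq (pow_nonneg (sqrt_nonneg _) d), pow_right_comm, sq_sqrt (by positivity)]
  simp_rw [hL]
  rw [integral_comp_mulVec hL0 fun y ↦ exp (-(1 / 2) * (y ⬝ᵥ y)),
    integral_exp_neg_half_dotProduct_self, ← hLdet, sqrt_div' _ (sq_nonneg _), sqrt_sq_eq_abs,
    hpow, inv_mul_eq_div]

end GaussianIntegral

section GaussDensity

variable {d : ℕ} {S : Matrix (Fin d) (Fin d) ℝ}

lemma integrable_gaussDensity (m : Fin d → ℝ) (hS : S.PosDef) : Integrable (gaussDensity m S) :=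
  ((integrable_exp_neg_half_dotProduct_mulVec hS.inv).comp_sub_right m).const_mul _

lemma integral_gaussDensity (m : Fin d → ℝ) (hS : S.PosDef) :
    ∫ x, gaussDensity m S x = 1 := by
  simp only [gaussDensity]
  rw [integral_const_mul,
    integral_sub_right_eq_self (fun x ↦ exp (-(1 / 2) * (x ⬝ᵥ (S⁻¹ *ᵥ x)))) m,
    integral_exp_neg_half_dotProduct_mulVec hS.inv, det_nonsing_inv, Ring.inverse_eq_inv',
    div_inv_eq_mul]
  exact inv_mul_cancel₀ (sqrt_pos.2 (mul_pos (pow_pos two_pi_pos d) hS.det_pos)).ne'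

end GaussDensity

section CompletingTheSquare

variable {n α : Type*} [Fintype n] [CommRing α]

lemma Matrix.IsSymm.dotProduct_mulVec_comm {N : Matrix n n α} (hN : N.IsSymm) (u w : n → α) :
    u ⬝ᵥ (N *ᵥ w) = w ⬝ᵥ (N *ᵥ u) := by
  rw [dotProduct_mulVec, ← mulVec_transpose, hN.eq, dotProduct_comm]

lemma Matrix.IsSymm.add_dotProduct_mulVec_add {N : Matrix n n α} (hN : N.IsSymm) (u w : n → α) :
    (u + w) ⬝ᵥ (N *ᵥ (u + w))
      = u ⬝ᵥ (N *ᵥ u) + 2 * u ⬝ᵥ (N *ᵥ w) + w ⬝ᵥ (N *ᵥ w) := by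
  rw [mulVec_add, dotProduct_add, add_dotProduct, add_dotProduct, hN.dotProduct_mulVec_comm w u]
  ring

variable [DecidableEq n]

lemma Matrix.inv_mul_inv_add_inv_inv_mul_inv {A B : Matrix n n α} (hA : IsUnit A.det)
    (hB : IsUnit B.det) : A⁻¹ * (A⁻¹ + B⁻¹)⁻¹ * B⁻¹ = (A + B)⁻¹ := by
  rw [← mul_inv_rev, ← mul_inv_rev, Matrix.add_mul, Matrix.mul_add, nonsing_inv_mul _ hA,
    Matrix.mul_one, ← Matrix.mul_assoc, mul_nonsing_inv _ hB, Matrix.one_mul, add_comm]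

/-- Completing the square. -/
lemma Matrix.IsSymm.dotProduct_mulVec_add_dotProduct_mulVec {P Q : Matrix n n α}
    (hP : P.IsSymm) (hQ : Q.IsSymm) (hPQ : IsUnit (P + Q).det) {a b c : n → α}
    (hc : (P + Q) *ᵥ c = P *ᵥ a + Q *ᵥ b) (x : n → α) :
    (x - a) ⬝ᵥ (P *ᵥ (x - a)) + (x - b) ⬝ᵥ (Q *ᵥ (x - b))
      = (a - b) ⬝ᵥ ((P * (P + Q)⁻¹ * Q) *ᵥ (a - b))
        + (x - c) ⬝ᵥ ((P + Q) *ᵥ (x - c)) := by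
  have hca : c - a = (P + Q)⁻¹ *ᵥ (Q *ᵥ (b - a)) := by
    have h : (P + Q) *ᵥ (c - a) = Q *ᵥ (b - a) := by
      rw [mulVec_sub, hc, add_mulVec, mulVec_sub]
      abel
    rw [← h, mulVec_mulVec, nonsing_inv_mul _ hPQ, one_mulVec]
  have hbalance : Q *ᵥ (c - b) = -(P *ᵥ (c - a)) := by
    rw [add_mulVec, ← sub_eq_zero] at hc
    rw [mulVec_sub, mulVec_sub, eq_neg_iff_add_eq_zero, ← hc]
    abel
  have hconst : (c - a) ⬝ᵥ (P *ᵥ (c - a)) - (c - b) ⬝ᵥ (P *ᵥ (c - a))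
      = (a - b) ⬝ᵥ ((P * (P + Q)⁻¹ * Q) *ᵥ (a - b)) := by
    rw [← sub_dotProduct, sub_sub_sub_cancel_left, hca, mulVec_mulVec, mulVec_mulVec,
      ← neg_sub a b, mulVec_neg, dotProduct_neg, neg_dotProduct, neg_neg]
  rw [← sub_add_sub_cancel x c a, ← sub_add_sub_cancel x c b, hP.add_dotProduct_mulVec_add,
    hQ.add_dotProduct_mulVec_add, add_mulVec, dotProduct_add, hbalance, dotProduct_neg,
    dotProduct_neg]
  linear_combination hconst

end CompletingTheSquare

lemma Matrix.det_inv_add_inv_inv {n α : Type*} [Fintype n] [DecidableEq n] [Field α]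
    {A B : Matrix n n α} (hA : IsUnit A.det) (hB : IsUnit B.det) :
    ((A⁻¹ + B⁻¹)⁻¹).det = A.det * B.det / (A + B).det := by
  have h := congrArg det (inv_mul_inv_add_inv_inv_mul_inv hA hB)
  simp only [det_mul, det_nonsing_inv, Ring.inverse_eq_inv'] at h ⊢
  field_simp [hA.ne_zero, hB.ne_zero] at h
  rw [inv_eq_one_div, h]

section GaussianProduct

variable {d : ℕ} {A B : Matrix (Fin d) (Fin d) ℝ}

lemma gaussDensity_mul_gaussDensity (hA : A.PosDef) (hB : B.PosDef) {a b c : Fin d → ℝ}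
    (hc : (A⁻¹ + B⁻¹) *ᵥ c = A⁻¹ *ᵥ a + B⁻¹ *ᵥ b) (x : Fin d → ℝ) :
    gaussDensity a A x * gaussDensity b B x
      = gaussDensity b (A + B) a * gaussDensity c (A⁻¹ + B⁻¹)⁻¹ x := by
  have hAu := hA.det_pos.ne'.isUnit
  have hBu := hB.det_pos.ne'.isUnit
  have hAB := hA.add hB
  have hR := hA.inv.add hB.inv
  have hnorm : √((2 * π) ^ d * A.det) * √((2 * π) ^ d * B.det)
      = √((2 * π) ^ d * (A + B).det) * √((2 * π) ^ d * ((A⁻¹ + B⁻¹)⁻¹).det) := by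
    rw [← sqrt_mul (by positivity [hA.det_pos]), ← sqrt_mul (by positivity [hAB.det_pos]),
      det_inv_add_inv_inv hAu hBu]
    field_simp [hAB.det_pos.ne']
  have hexp := (isHermitian_iff_isSymm.mp hA.inv.isHermitian)
    |>.dotProduct_mulVec_add_dotProduct_mulVec (isHermitian_iff_isSymm.mp hB.inv.isHermitian)
      hR.det_pos.ne'.isUnit hc x
  rw [inv_mul_inv_add_inv_inv_mul_inv hAu hBu] at hexp
  simp only [gaussDensity, nonsing_inv_nonsing_inv _ hR.det_pos.ne'.isUnit]
  calc _ = (√((2 * π) ^ d * A.det) * √((2 * π) ^ d * B.det))⁻¹ *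
          exp (-(1 / 2) *
            ((x - a) ⬝ᵥ (A⁻¹ *ᵥ (x - a)) + (x - b) ⬝ᵥ (B⁻¹ *ᵥ (x - b)))) := by
        rw [mul_inv, mul_add, exp_add]; ring
    _ = _ := by
        rw [hnorm, hexp, mul_inv, mul_add, exp_add]; ring

lemma integrable_gaussDensity_mul_gaussDensity (hA : A.PosDef) (hB : B.PosDef)
    (a b : Fin d → ℝ) : Integrable (fun x ↦ gaussDensity a A x * gaussDensity b B x) := by
  have hR := hA.inv.add hB.inv
  have hc : (A⁻¹ + B⁻¹) *ᵥ ((A⁻¹ + B⁻¹)⁻¹ *ᵥ (A⁻¹ *ᵥ a + B⁻¹ *ᵥ b))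
      = A⁻¹ *ᵥ a + B⁻¹ *ᵥ b := by
    rw [mulVec_mulVec, mul_nonsing_inv _ hR.det_pos.ne'.isUnit, one_mulVec]
  simp_rw [gaussDensity_mul_gaussDensity hA hB hc]
  exact (integrable_gaussDensity _ hR.inv).const_mul _

lemma integral_gaussDensity_mul_gaussDensity (hA : A.PosDef) (hB : B.PosDef) (a b : Fin d → ℝ) :
    ∫ x, gaussDensity a A x * gaussDensity b B x = gaussDensity b (A + B) a := by
  have hR := hA.inv.add hB.inv
  have hc : (A⁻¹ + B⁻¹) *ᵥ ((A⁻¹ + B⁻¹)⁻¹ *ᵥ (A⁻¹ *ᵥ a + B⁻¹ *ᵥ b))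
      = A⁻¹ *ᵥ a + B⁻¹ *ᵥ b := by
    rw [mulVec_mulVec, mul_nonsing_inv _ hR.det_pos.ne'.isUnit, one_mulVec]
  simp_rw [gaussDensity_mul_gaussDensity hA hB hc]
  rw [integral_const_mul, integral_gaussDensity _ hR.inv, mul_one]

lemma gaussDensity_mul_gaussDensity_of_eq (hA : A.PosDef) (a b x : Fin d → ℝ) :
    gaussDensity a A x * gaussDensity b A x
      = gaussDensity b ((2 : ℝ) • A) a *
          gaussDensity ((1 / 2 : ℝ) • (a + b)) ((1 / 2 : ℝ) • A) x := by
  have hAu := hA.det_pos.ne'.isUnit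
  have hinv : (A⁻¹ + A⁻¹)⁻¹ = (1 / 2 : ℝ) • A := by
    refine inv_eq_right_inv ?_
    rw [← two_smul ℝ A⁻¹, smul_mul_smul_comm, nonsing_inv_mul _ hAu]
    norm_num
  have hc : (A⁻¹ + A⁻¹) *ᵥ ((1 / 2 : ℝ) • (a + b)) = A⁻¹ *ᵥ a + A⁻¹ *ᵥ b := by
    rw [← two_smul ℝ A⁻¹, mulVec_smul, smul_mulVec, smul_smul, mulVec_add]
    norm_num
  rw [gaussDensity_mul_gaussDensity hA hA hc, hinv, two_smul]

end GaussianProduct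

section PosteriorMean

variable {d n : ℕ} (v : ℝ) {W : Matrix (Fin d) (Fin d) ℝ} (X : Fin n → (Fin d → ℝ))
  (y : Fin n → ℝ)

lemma gpMean_sq (hW : W.PosDef) (x : Fin d → ℝ) :
    gpMean v W X y x ^ 2 = ∑ i, ∑ j,
      v ^ 2 * woodbury v W X y i * woodbury v W X y j * gaussDensity (X j) ((2 : ℝ) • W) (X i) *
        gaussDensity ((1 / 2 : ℝ) • (X i + X j)) ((1 / 2 : ℝ) • W) x := by
  rw [gpMean, mul_pow, sq (∑ i, _), Finset.sum_mul_sum, Finset.mul_sum]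
  refine Finset.sum_congr rfl fun i _ ↦ ?_
  rw [Finset.mul_sum]
  refine Finset.sum_congr rfl fun j _ ↦ ?_
  rw [mul_assoc _ (gaussDensity (X j) _ _), ← gaussDensity_mul_gaussDensity_of_eq hW]
  ring

variable {μ : Fin d → ℝ} {S : Matrix (Fin d) (Fin d) ℝ}

lemma integrable_gpMean_sq_mul_gaussDensity (hW : W.PosDef) (hS : S.PosDef) :
    Integrable fun x ↦ gpMean v W X y x ^ 2 * gaussDensity μ S x := by
  have hW2 : ((1 / 2 : ℝ) • W).PosDef := hW.smul (by norm_num)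
  simp_rw [gpMean_sq v X y hW, Finset.sum_mul, mul_assoc _ (gaussDensity _ ((1 / 2 : ℝ) • W) _)]
  exact integrable_finsetSum _ fun i _ ↦ integrable_finsetSum _ fun j _ ↦
    (integrable_gaussDensity_mul_gaussDensity hW2 hS _ _).const_mul _

lemma integral_gpMean_sq_mul_gaussDensity (hW : W.PosDef) (hS : S.PosDef) :
    ∫ x, gpMean v W X y x ^ 2 * gaussDensity μ S x = ∑ i, ∑ j,
      v ^ 2 * woodbury v W X y i * woodbury v W X y j * gaussDensity (X j) ((2 : ℝ) • W) (X i) *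
        gaussDensity μ ((1 / 2 : ℝ) • W + S) ((1 / 2 : ℝ) • (X i + X j)) := by
  have hW2 : ((1 / 2 : ℝ) • W).PosDef := hW.smul (by norm_num)
  have hint := fun i j ↦
    (integrable_gaussDensity_mul_gaussDensity hW2 hS ((1 / 2 : ℝ) • (X i + X j)) μ).const_mul
      (v ^ 2 * woodbury v W X y i * woodbury v W X y j * gaussDensity (X j) ((2 : ℝ) • W) (X i))
  simp_rw [gpMean_sq v X y hW, Finset.sum_mul, mul_assoc _ (gaussDensity _ ((1 / 2 : ℝ) • W) _)]
  rw [integral_finsetSum _ fun i _ ↦ integrable_finsetSum _ fun j _ ↦ hint i j]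
  refine Finset.sum_congr rfl fun i _ ↦ ?_
  rw [integral_finsetSum _ fun j _ ↦ hint i j]
  refine Finset.sum_congr rfl fun j _ ↦ ?_
  rw [integral_const_mul, integral_gaussDensity_mul_gaussDensity hW2 hS]

end PosteriorMean

theorem statement11_general
    {d n : ℕ} (v : ℝ)
    (W : Matrix (Fin d) (Fin d) ℝ) (hW : W.PosDef)
    (X : Fin n → (Fin d → ℝ)) (y : Fin n → ℝ)
    (μπ : Fin d → ℝ) (Sπ : Matrix (Fin d) (Fin d) ℝ) (hSπ : Sπ.PosDef) :
    ∀ α : ℝ,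
      ∫ x, (α + 1 / 2 * gpMean v W X y x ^ 2) * gaussDensity μπ Sπ x
        = α + ∑ i, ∑ j,
            (1 / 2 * v ^ 2 * woodbury v W X y i * woodbury v W X y j *
              gaussDensity (X j) ((2 : ℝ) • W) (X i)) *
            gaussDensity μπ ((1 / 2 : ℝ) • W + Sπ) ((1 / 2 : ℝ) • (X i + X j)) := by
  intro α
  simp_rw [add_mul, mul_assoc (1 / 2 : ℝ)]
  rw [integral_add ((integrable_gaussDensity μπ hSπ).const_mul α)
      ((integrable_gpMean_sq_mul_gaussDensity v X y hW hSπ).const_mul _),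
    integral_const_mul, integral_const_mul, integral_gaussDensity μπ hSπ,
    integral_gpMean_sq_mul_gaussDensity v X y hW hSπ, mul_one]
  simp only [Finset.mul_sum, mul_assoc]

/-- With the WSABI-L setup, let `π(x) = N(x; μ_π, Σ_π)` be a
Gaussian prior density with `Σ_π` symmetric positive definite.  Then for every `α`,
`∫ (α + ½ m̃(x)²) π(x) dx = α + Σ_{i,j} w^m_{ij} N((X_i + X_j)/2; μ_π, W/2 + Σ_π)`,
where `w^m_{ij} := ½ v² ω_i ω_j N(X_i; X_j, 2W)`. -/
theorem statement11
    {d n : ℕ} (v : ℝ) (hv : 0 < v)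
    (W : Matrix (Fin d) (Fin d) ℝ) (hW : W.PosDef)
    (X : Fin n → (Fin d → ℝ)) (y : Fin n → ℝ)
    (hK : IsUnit (gramKxx v W X).det)
    (μπ : Fin d → ℝ) (Sπ : Matrix (Fin d) (Fin d) ℝ) (hSπ : Sπ.PosDef) :
    ∀ α : ℝ,
      ∫ x, (α + 1 / 2 * gpMean v W X y x ^ 2) * gaussDensity μπ Sπ x
        = α + ∑ i, ∑ j,
            (1 / 2 * v ^ 2 * woodbury v W X y i * woodbury v W X y j *
              gaussDensity (X j) ((2 : ℝ) • W) (X i)) *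
            gaussDensity μπ ((1 / 2 : ℝ) • W + Sπ) ((1 / 2 : ℝ) • (X i + X j)) :=
  statement11_general v W hW X y μπ Sπ hSπ
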